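/- arXiv:2004.12517 — 2 statements merged into one kernel-verified Lean document; each statement's English description precedes it below -/
import Mathlib

section
/- Let P be a finite PIP and define the alternating sum χ = Σ_{i≥0} (-1)^i f_i(⊞_P), where f_i(⊞_P) is the number of pairs (I, M) with I a consistent downset and M ⊆ max I of size i. Then χ = 1. -/
open Finset

variable {P : Type*} [Fintype P] [DecidableEq P] [PartialOrder P]

/-- A subset is consistent if it contains no inconsistent pair. -/
def Consistent (incons : P → P → Prop) (S : Finset P) : Prop :=
  ∀ a ∈ S, ∀ b ∈ S, ¬ incons a b

/-- A downset (order ideal). -/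
def IsDownset (I : Finset P) : Prop :=
  ∀ x ∈ I, ∀ y, y ≤ x → y ∈ I

open Classical in
/-- The maximal elements of a finite set. -/
noncomputable def maxElems (I : Finset P) : Finset P :=
  I.filter (fun x => ∀ y ∈ I, ¬ x < y)

open Classical in
/-- The downset generated by a set. -/
noncomputable def downGen (A : Finset P) : Finset P :=
  Finset.univ.filter (fun x => ∃ a ∈ A, x ≤ a)

/-- A consistent antichain: the faces of the crossing complex `Δ_P`. -/
def ConsAntichain (incons : P → P → Prop) (A : Finset P) : Prop :=
  (∀ a ∈ A, ∀ b ∈ A, a ≠ b → ¬ a ≤ b) ∧ Consistent incons A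

/-- A face of the cubical complex `⊞_P`: a pair (I, M) with I a consistent
downset and M ⊆ max I. -/
def IsFace (incons : P → P → Prop) (I M : Finset P) : Prop :=
  IsDownset I ∧ Consistent incons I ∧ M ⊆ maxElems I

/-- The face-containment order on faces of `⊞_P`:
`C(I',M') ⊆ C(I,M)` iff `M' ⊆ M` and `I \ M ⊆ I' ⊆ I`. -/
def FaceLE (p q : Finset P × Finset P) : Prop :=
  p.2 ⊆ q.2 ∧ q.1 \ q.2 ⊆ p.1 ∧ p.1 ⊆ q.1

open Classical in
/-- `f_i(⊞_P)`: the number of `i`-dimensional faces `C(I,M)` of the cubical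
complex `⊞_P`, i.e. pairs `(I, M)` with `I` a consistent downset, `M ⊆ max I`
and `|M| = i`. -/
noncomputable def cubeFaceCount (incons : P → P → Prop) (i : ℕ) : ℕ :=
  (Finset.univ.filter (fun p : Finset P × Finset P =>
    IsDownset p.1 ∧ Consistent incons p.1 ∧ p.2 ⊆ maxElems p.1 ∧ p.2.card = i)).card

open Classical in
/-- `f_{j-1}(Δ_P)`: the number of consistent antichains of cardinality `j`. -/
noncomputable def antichainCount (incons : P → P → Prop) (j : ℕ) : ℕ :=
  (Finset.univ.filter (fun A : Finset P => ConsAntichain incons A ∧ A.card = j)).card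

/-!
Group the faces `(I, M)` of `⊞_P` by their downset `I`. For fixed `I` the signs `(-1)^|M|` over
`M ⊆ max I` sum to `0` unless `max I = ∅`, and a finite set has no maximal elements only when it
is empty. So only the empty downset contributes, and it contributes `1`.
-/

theorem maxElems_eq_empty_iff {I : Finset P} : maxElems I = ∅ ↔ I = ∅ := by
  refine ⟨fun h => ?_, fun h => by simp [h, maxElems]⟩
  by_contra hI
  obtain ⟨m, hm⟩ := I.exists_maximal (nonempty_iff_ne_empty.2 hI)
  have hm_max : m ∈ maxElems I := by
    classical
    exact mem_filter.2 ⟨hm.prop, fun _ hy => hm.not_gt hy⟩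
  simp [h] at hm_max

theorem sum_powerset_maxElems_neg_one_pow (I : Finset P) :
    ∑ M ∈ (maxElems I).powerset, (-1 : ℤ) ^ #M = if I = ∅ then 1 else 0 := by
  simp only [sum_powerset_neg_one_pow_card, maxElems_eq_empty_iff]

open Classical in
noncomputable def consistentDownsets (incons : P → P → Prop) : Finset (Finset P) :=
  univ.filter fun I => IsDownset I ∧ Consistent incons I

open Classical in
noncomputable def cubeFaces (incons : P → P → Prop) : Finset (Finset P × Finset P) :=
  univ.filter fun p => IsFace incons p.1 p.2

theorem mem_cubeFaces {incons : P → P → Prop} {p : Finset P × Finset P} :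
    p ∈ cubeFaces incons ↔ IsFace incons p.1 p.2 := by
  classical
  simp [cubeFaces]

theorem cubeFaceCount_eq_card_filter (incons : P → P → Prop) (i : ℕ) :
    cubeFaceCount incons i = #{p ∈ cubeFaces incons | #p.2 = i} := by
  classical
  rw [cubeFaceCount, cubeFaces, filter_filter]
  simp only [IsFace, and_assoc]

theorem sum_cubeFaces_eq_sum_sum_powerset_maxElems {β : Type*} [AddCommMonoid β]
    (incons : P → P → Prop) (f : Finset P × Finset P → β) :
    ∑ p ∈ cubeFaces incons, f p =
      ∑ I ∈ consistentDownsets incons, ∑ M ∈ (maxElems I).powerset, f (I, M) :=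
  sum_finset_product _ _ _ fun p => by
    classical
    simp [mem_cubeFaces, consistentDownsets, IsFace, and_assoc]

theorem alternating_sum_cubeFaceCount (incons : P → P → Prop) :
    ∑ i ∈ range (Fintype.card P + 1), (-1 : ℤ) ^ i * (cubeFaceCount incons i : ℤ) =
      ∑ p ∈ cubeFaces incons, (-1 : ℤ) ^ #p.2 := by
  have h_card_le : ∀ p ∈ cubeFaces incons, #p.2 ∈ range (Fintype.card P + 1) :=
    fun p _ => mem_range_succ_iff.2 (card_le_univ p.2)
  rw [← sum_fiberwise_of_maps_to' h_card_le]
  refine sum_congr rfl fun i _ => ?_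
  rw [sum_const, cubeFaceCount_eq_card_filter, nsmul_eq_mul, mul_comm]

theorem euler_characteristic_cubical_general (incons : P → P → Prop) :
    ∑ i ∈ Finset.range (Fintype.card P + 1),
        (-1 : ℤ) ^ i * (cubeFaceCount incons i : ℤ) = 1 := by
  have h_empty : ∅ ∈ consistentDownsets incons := by
    classical
    exact mem_filter.2 ⟨mem_univ _, by simp [IsDownset, Consistent]⟩
  rw [alternating_sum_cubeFaceCount, sum_cubeFaces_eq_sum_sum_powerset_maxElems]
  simp only [sum_powerset_maxElems_neg_one_pow]
  rw [sum_ite_eq', if_pos h_empty]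

/-- The Euler characteristic of `⊞_P` is `1`. -/
theorem euler_characteristic_cubical (incons : P → P → Prop)
    (hirr : ∀ a, ¬ incons a a)
    (hsymm : ∀ a b, incons a b → incons b a)
    (hup : ∀ a b a' b', incons a b → a ≤ a' → b ≤ b' → incons a' b') :
    ∑ i ∈ Finset.range (Fintype.card P + 1),
        (-1 : ℤ) ^ i * (cubeFaceCount incons i : ℤ) = 1 :=
  euler_characteristic_cubical_general incons
end

section
/- Let P be a finite PIP, and let C(I_1,M_1), C(I_2,M_2) be faces of ⊞_P. These faces have a meet (a largest common subface) if and only if (I_1 \ M_1) ∪ (I_2 \ M_2) ⊆ I_1 ∩ I_2, in which case the meet is C(I_1 ∩ I_2, M_1 ∩ M_2). -/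
/-!
Every common subface `C(J, N)` of the two faces satisfies `Iₖ \ Mₖ ⊆ J ⊆ I₁ ∩ I₂`, which forces
the condition. Conversely, under the condition `C(I₁ ∩ I₂, M₁ ∩ M₂)` is a common subface, and it
contains every other one because `(I₁ ∩ I₂) \ (M₁ ∩ M₂) ⊆ (I₁ \ M₁) ∪ (I₂ \ M₂)`.
-/

open Finset

variable {P : Type*} [Fintype P] [DecidableEq P] [PartialOrder P]

theorem IsDownset.inter {α : Type*} [PartialOrder α] [DecidableEq α] {I₁ I₂ : Finset α}
    (h₁ : IsDownset I₁) (h₂ : IsDownset I₂) : IsDownset (I₁ ∩ I₂) := by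
  intro x hx y hyx
  rw [mem_inter] at hx ⊢
  exact ⟨h₁ x hx.1 y hyx, h₂ x hx.2 y hyx⟩

theorem Consistent.mono {α : Type*} {incons : α → α → Prop} {S T : Finset α}
    (hT : Consistent incons T) (hST : S ⊆ T) : Consistent incons S :=
  fun a ha b hb => hT a (hST ha) b (hST hb)

theorem maxElems_inter_subset_maxElems_inter {α : Type*} [Fintype α] [PartialOrder α]
    [DecidableEq α] (I₁ I₂ : Finset α) : maxElems I₁ ∩ maxElems I₂ ⊆ maxElems (I₁ ∩ I₂) := by
  intro x hx
  simp only [maxElems, mem_inter, mem_filter] at hx ⊢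
  exact ⟨⟨hx.1.1, hx.2.1⟩, fun y hy => hx.1.2 y hy.1⟩

theorem IsFace.inter {α : Type*} [Fintype α] [PartialOrder α] [DecidableEq α]
    {incons : α → α → Prop} {I₁ M₁ I₂ M₂ : Finset α}
    (h₁ : IsFace incons I₁ M₁) (h₂ : IsFace incons I₂ M₂) :
    IsFace incons (I₁ ∩ I₂) (M₁ ∩ M₂) :=
  ⟨h₁.1.inter h₂.1, h₁.2.1.mono inter_subset_left,
    (inter_subset_inter h₁.2.2 h₂.2.2).trans (maxElems_inter_subset_maxElems_inter I₁ I₂)⟩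

theorem faceLE_inter_left {α : Type*} [DecidableEq α] {I₁ M₁ I₂ M₂ : Finset α}
    (h : I₁ \ M₁ ⊆ I₁ ∩ I₂) : FaceLE (I₁ ∩ I₂, M₁ ∩ M₂) (I₁, M₁) :=
  ⟨inter_subset_left, h, inter_subset_left⟩

theorem faceLE_inter_right {α : Type*} [DecidableEq α] {I₁ M₁ I₂ M₂ : Finset α}
    (h : I₂ \ M₂ ⊆ I₁ ∩ I₂) : FaceLE (I₁ ∩ I₂, M₁ ∩ M₂) (I₂, M₂) :=
  ⟨inter_subset_right, h, inter_subset_right⟩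

theorem FaceLE.sdiff_union_sdiff_subset_inter {α : Type*} [DecidableEq α]
    {p q₁ q₂ : Finset α × Finset α} (h₁ : FaceLE p q₁) (h₂ : FaceLE p q₂) :
    (q₁.1 \ q₁.2) ∪ (q₂.1 \ q₂.2) ⊆ q₁.1 ∩ q₂.1 :=
  union_subset (h₁.2.1.trans (subset_inter h₁.2.2 h₂.2.2))
    (h₂.2.1.trans (subset_inter h₁.2.2 h₂.2.2))

theorem FaceLE.le_inter {α : Type*} [DecidableEq α] {p : Finset α × Finset α}
    {I₁ M₁ I₂ M₂ : Finset α} (h₁ : FaceLE p (I₁, M₁)) (h₂ : FaceLE p (I₂, M₂)) :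
    FaceLE p (I₁ ∩ I₂, M₁ ∩ M₂) := by
  obtain ⟨hM₁, hsdiff₁, hI₁⟩ := h₁
  obtain ⟨hM₂, hsdiff₂, hI₂⟩ := h₂
  have hsdiff : (I₁ ∩ I₂) \ (M₁ ∩ M₂) ⊆ (I₁ \ M₁) ∪ (I₂ \ M₂) := by
    intro x
    simp only [mem_sdiff, mem_inter, mem_union]
    tauto
  exact ⟨subset_inter hM₁ hM₂, hsdiff.trans (union_subset hsdiff₁ hsdiff₂),
    subset_inter hI₁ hI₂⟩

theorem IsFace.inter_isMeet {α : Type*} [Fintype α] [PartialOrder α] [DecidableEq α]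
    {incons : α → α → Prop} {I₁ M₁ I₂ M₂ : Finset α}
    (h₁ : IsFace incons I₁ M₁) (h₂ : IsFace incons I₂ M₂)
    (h : (I₁ \ M₁) ∪ (I₂ \ M₂) ⊆ I₁ ∩ I₂) :
    IsFace incons (I₁ ∩ I₂) (M₁ ∩ M₂) ∧
      FaceLE (I₁ ∩ I₂, M₁ ∩ M₂) (I₁, M₁) ∧
      FaceLE (I₁ ∩ I₂, M₁ ∩ M₂) (I₂, M₂) ∧
      ∀ J' N' : Finset α, IsFace incons J' N' →
        FaceLE (J', N') (I₁, M₁) → FaceLE (J', N') (I₂, M₂) →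
        FaceLE (J', N') (I₁ ∩ I₂, M₁ ∩ M₂) :=
  ⟨h₁.inter h₂, faceLE_inter_left (union_subset_left h),
    faceLE_inter_right (union_subset_right h), fun _ _ _ hle₁ hle₂ => hle₁.le_inter hle₂⟩

theorem face_meet_general (incons : P → P → Prop)
    (I₁ M₁ I₂ M₂ : Finset P)
    (h₁ : IsFace incons I₁ M₁) (h₂ : IsFace incons I₂ M₂) :
    ((∃ J N : Finset P, IsFace incons J N ∧
        FaceLE (J, N) (I₁, M₁) ∧ FaceLE (J, N) (I₂, M₂) ∧
        ∀ J' N' : Finset P, IsFace incons J' N' →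
          FaceLE (J', N') (I₁, M₁) → FaceLE (J', N') (I₂, M₂) →
          FaceLE (J', N') (J, N)) ↔
      (I₁ \ M₁) ∪ (I₂ \ M₂) ⊆ I₁ ∩ I₂) ∧
    ((I₁ \ M₁) ∪ (I₂ \ M₂) ⊆ I₁ ∩ I₂ →
      IsFace incons (I₁ ∩ I₂) (M₁ ∩ M₂) ∧
      FaceLE (I₁ ∩ I₂, M₁ ∩ M₂) (I₁, M₁) ∧
      FaceLE (I₁ ∩ I₂, M₁ ∩ M₂) (I₂, M₂) ∧
      ∀ J' N' : Finset P, IsFace incons J' N' →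
        FaceLE (J', N') (I₁, M₁) → FaceLE (J', N') (I₂, M₂) →
        FaceLE (J', N') (I₁ ∩ I₂, M₁ ∩ M₂)) := by
  refine ⟨⟨?_, fun h => ⟨_, _, h₁.inter_isMeet h₂ h⟩⟩, h₁.inter_isMeet h₂⟩
  rintro ⟨J, N, -, hle₁, hle₂, -⟩
  exact hle₁.sdiff_union_sdiff_subset_inter hle₂

/-- Two faces `C(I₁,M₁)` and `C(I₂,M₂)` of `⊞_P` have a meet iff
`(I₁ \ M₁) ∪ (I₂ \ M₂) ⊆ I₁ ∩ I₂`, in which case the meet is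
`C(I₁ ∩ I₂, M₁ ∩ M₂)`. -/
theorem face_meet (incons : P → P → Prop)
    (hirr : ∀ a, ¬ incons a a)
    (hsymm : ∀ a b, incons a b → incons b a)
    (hup : ∀ a b a' b', incons a b → a ≤ a' → b ≤ b' → incons a' b')
    (I₁ M₁ I₂ M₂ : Finset P)
    (h₁ : IsFace incons I₁ M₁) (h₂ : IsFace incons I₂ M₂) :
    ((∃ J N : Finset P, IsFace incons J N ∧
        FaceLE (J, N) (I₁, M₁) ∧ FaceLE (J, N) (I₂, M₂) ∧
        ∀ J' N' : Finset P, IsFace incons J' N' →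
          FaceLE (J', N') (I₁, M₁) → FaceLE (J', N') (I₂, M₂) →
          FaceLE (J', N') (J, N)) ↔
      (I₁ \ M₁) ∪ (I₂ \ M₂) ⊆ I₁ ∩ I₂) ∧
    ((I₁ \ M₁) ∪ (I₂ \ M₂) ⊆ I₁ ∩ I₂ →
      IsFace incons (I₁ ∩ I₂) (M₁ ∩ M₂) ∧
      FaceLE (I₁ ∩ I₂, M₁ ∩ M₂) (I₁, M₁) ∧
      FaceLE (I₁ ∩ I₂, M₁ ∩ M₂) (I₂, M₂) ∧
      ∀ J' N' : Finset P, IsFace incons J' N' →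
        FaceLE (J', N') (I₁, M₁) → FaceLE (J', N') (I₂, M₂) →
        FaceLE (J', N') (I₁ ∩ I₂, M₁ ∩ M₂)) :=
  face_meet_general incons I₁ M₁ I₂ M₂ h₁ h₂
end
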